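/- arXiv:1511.00071 — 2 statements merged into one kernel-verified Lean document; each statement's English description precedes it below -/
import Mathlib

section
/- Define, for odd squarefree $d_0$ and $\Re s > 0$, $H(s) = \sum_{(d_1, 2N)=1} d_1^{-2-s} \sum_{f_1 \mid d_1} \prod_{p \mid 2f_1}\left(1 - p^{-s-1} E_1(s; p)\right)$ where $E_1(s; p) = (1+p^{-1})^{-2}(1-p^{-2s-1})^{-1}(1+p^{-1}-p^{-2s-1})$ for odd prime $p$ and $E_1(s;2)=1$. Then there exists an absolute constant $K > 0$ such that $1/3 \leq H(0) \leq K$ and $|H'(0)| \leq K$, uniformly in the odd number $N$. -/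
/-- The Euler factor `E₁(s; p)` for a prime `p`, with `E₁(s; 2) = 1`. -/
noncomputable def E1R (s : ℝ) (p : ℕ) : ℝ :=
  if p = 2 then 1 else
    ((1 + (p:ℝ)⁻¹) ^ 2)⁻¹ * (1 - (p:ℝ) ^ (-2*s-1))⁻¹ * (1 + (p:ℝ)⁻¹ - (p:ℝ) ^ (-2*s-1))

/-- The function `H(s)` (depending on `N`). -/
noncomputable def Hfun (N : ℕ) (s : ℝ) : ℝ :=
  ∑' d1 : ℕ, if d1 ≠ 0 ∧ Nat.Coprime d1 (2*N) then
    (d1:ℝ) ^ (-2-s) *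
      ∑ f1 ∈ d1.divisors, ∏ p ∈ (2*f1).primeFactors, (1 - (p:ℝ) ^ (-s-1) * E1R s p)
  else 0

/-!
With `c = 1/p` (and `c = 0` for `p = 2`) and `x = p^(-2s-1)` one has
`E₁(s; p) = (1 + c/(1 - x)) / (1 + c)²`, which lies in `[0, 1]` for `s ≥ -1/8`. Hence every
local factor `1 - p^(-s-1) E₁(s; p)` lies in `[0, 1]` and has derivative `O(log p)`, so the
inner sum over `f₁ ∣ d₁` is at most `τ(d₁)` with derivative `O(τ(d₁) log 2d₁)`. For `s > -1/8`
the `d₁`-th term of `H` and its derivative are therefore `O(d₁^(-15/8) τ(d₁) log 2d₁)`, which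
is `O(d₁^(-9/8))` by `τ(d) ≤ 2√d`, uniformly in `N`; differentiating term by term gives the
bounds. The term `d₁ = 1` equals `1 - 2⁻¹`, whence `H(0) ≥ 1/2`.
-/

open Real Finset

noncomputable def localFactor (p : ℕ) (t : ℝ) : ℝ := 1 - (p : ℝ) ^ (-t - 1) * E1R t p

noncomputable def E1Coeff (p : ℕ) : ℝ := if p = 2 then 0 else (p : ℝ)⁻¹

noncomputable def localFactorDeriv (p : ℕ) (t : ℝ) : ℝ :=
  log p * (p : ℝ) ^ (-t - 1) / (1 + E1Coeff p) ^ 2 *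
    (1 + E1Coeff p / (1 - (p : ℝ) ^ (-2 * t - 1)) +
      2 * E1Coeff p * (p : ℝ) ^ (-2 * t - 1) / (1 - (p : ℝ) ^ (-2 * t - 1)) ^ 2)

lemma E1Coeff_nonneg (p : ℕ) : 0 ≤ E1Coeff p := by
  unfold E1Coeff; split_ifs <;> positivity

section LocalFactor

variable {p : ℕ} {t : ℝ}

lemma E1Coeff_le_half (hp : p.Prime) : E1Coeff p ≤ 1 / 2 := by
  unfold E1Coeff
  split_ifs
  · norm_num
  · rw [inv_le_comm₀ (by exact_mod_cast hp.pos) (by norm_num)]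
    norm_num
    exact_mod_cast hp.two_le

lemma rpow_neg_two_mul_sub_one_lt_one (hp : 1 < p) (ht : -1 / 2 < t) :
    (p : ℝ) ^ (-2 * t - 1) < 1 :=
  rpow_lt_one_of_one_lt_of_neg (by exact_mod_cast hp) (by linarith)

lemma rpow_neg_sub_one_le_one (hp : 1 ≤ p) (ht : -1 ≤ t) : (p : ℝ) ^ (-t - 1) ≤ 1 :=
  rpow_le_one_of_one_le_of_nonpos (by exact_mod_cast hp) (by linarith)

lemma E1R_eq (hp : p.Prime) (ht : -1 / 2 < t) :
    E1R t p = (1 + E1Coeff p / (1 - (p : ℝ) ^ (-2 * t - 1))) / (1 + E1Coeff p) ^ 2 := by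
  have hx := rpow_neg_two_mul_sub_one_lt_one hp.one_lt ht
  unfold E1R E1Coeff
  split_ifs
  · norm_num
  · have : (0 : ℝ) < p := by exact_mod_cast hp.pos
    generalize (p : ℝ) ^ (-2 * t - 1) = x at hx ⊢
    have hx0 : 1 - x ≠ 0 := by linarith
    field_simp
    ring

lemma hasDerivAt_localFactor (hp : p.Prime) (ht : -1 / 2 < t) :
    HasDerivAt (localFactor p) (localFactorDeriv p t) t := by
  have hp0 : (0 : ℝ) < p := by exact_mod_cast hp.pos
  unfold localFactorDeriv
  set c := E1Coeff p
  have hc : 0 < 1 + c := by linarith [E1Coeff_nonneg p]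
  have hx1 : 1 - (p : ℝ) ^ (-2 * t - 1) ≠ 0 :=
    (sub_pos.2 (rpow_neg_two_mul_sub_one_lt_one hp.one_lt ht)).ne'
  have heq : (fun u => 1 - (p : ℝ) ^ (-u - 1) * (1 + c * (1 - (p : ℝ) ^ (-2 * u - 1))⁻¹) /
      (1 + c) ^ 2) =ᶠ[nhds t] localFactor p := by
    filter_upwards [Ioi_mem_nhds ht] with u hu
    rw [localFactor, E1R_eq hp hu]
    ring
  have hy : HasDerivAt (fun u => (p : ℝ) ^ (-u - 1)) (log p * (-1) * (p : ℝ) ^ (-t - 1)) t :=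
    ((hasDerivAt_neg t).sub_const 1).const_rpow hp0
  have hx : HasDerivAt (fun u => (p : ℝ) ^ (-2 * u - 1))
      (log p * (-2) * (p : ℝ) ^ (-2 * t - 1)) t := by
    simpa using (((hasDerivAt_id t).const_mul (-2)).sub_const 1).const_rpow hp0
  have hw := ((hx.const_sub 1).fun_inv hx1).const_mul c |>.const_add 1
  refine ((((hy.fun_mul hw).div_const ((1 + c) ^ 2)).const_sub 1).congr_of_eventuallyEq
    heq.symm).congr_deriv ?_
  generalize (p : ℝ) ^ (-2 * t - 1) = x at hx1 ⊢
  field_simp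
  ring

lemma two_le_rpow_three_fourths (hp : 3 ≤ p) : 2 ≤ (p : ℝ) ^ (3 / 4 : ℝ) := by
  have hp' : (3 : ℝ) ≤ p := by exact_mod_cast hp
  refine le_of_pow_le_pow_left₀ (n := 4) (by norm_num) (by positivity) ?_
  rw [← rpow_natCast ((p : ℝ) ^ (3 / 4 : ℝ)), ← rpow_mul (by positivity)]
  norm_num
  nlinarith [pow_le_pow_left₀ (by norm_num) hp' 3]

/-- For `p = 2` and `t < 0` the power exceeds `1/2`; there the vanishing coefficient takes over. -/
lemma E1Coeff_eq_zero_or (hp : p.Prime) (ht : -1 / 8 ≤ t) :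
    E1Coeff p = 0 ∨ (p : ℝ) ^ (-2 * t - 1) ≤ 1 / 2 := by
  unfold E1Coeff
  split_ifs with h2
  · exact .inl rfl
  refine .inr ?_
  have hp3 : 3 ≤ p := by have := hp.two_le; omega
  have hp1 : (1 : ℝ) ≤ p := by exact_mod_cast hp.one_lt.le
  calc (p : ℝ) ^ (-2 * t - 1) ≤ (p : ℝ) ^ (-(3 / 4) : ℝ) :=
        rpow_le_rpow_of_exponent_le hp1 (by linarith)
    _ = ((p : ℝ) ^ (3 / 4 : ℝ))⁻¹ := rpow_neg (by positivity) _
    _ ≤ 1 / 2 := by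
        rw [one_div]
        exact inv_anti₀ (by norm_num) (two_le_rpow_three_fourths hp3)

lemma E1Coeff_div_le (hp : p.Prime) (ht : -1 / 8 ≤ t) :
    E1Coeff p / (1 - (p : ℝ) ^ (-2 * t - 1)) ≤ 2 * E1Coeff p ∧
      2 * E1Coeff p * (p : ℝ) ^ (-2 * t - 1) / (1 - (p : ℝ) ^ (-2 * t - 1)) ^ 2 ≤
        4 * E1Coeff p := by
  have hx1 := rpow_neg_two_mul_sub_one_lt_one hp.one_lt (t := t) (by linarith)
  have hc := E1Coeff_nonneg p
  rcases E1Coeff_eq_zero_or hp ht with h0 | hx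
  · simp [h0]
  generalize (p : ℝ) ^ (-2 * t - 1) = x at *
  constructor
  · rw [div_le_iff₀ (by linarith)]
    nlinarith
  · rw [div_le_iff₀ (by positivity)]
    nlinarith [mul_nonneg hc (mul_nonneg (by linarith : 0 ≤ 1 - 2 * x) (by linarith : 0 ≤ 2 - x))]

lemma E1R_nonneg_le_one (hp : p.Prime) (ht : -1 / 8 ≤ t) : 0 ≤ E1R t p ∧ E1R t p ≤ 1 := by
  have hx1 := rpow_neg_two_mul_sub_one_lt_one hp.one_lt (t := t) (by linarith)
  have hc := E1Coeff_nonneg p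
  have hdiv := (E1Coeff_div_le hp ht).1
  rw [E1R_eq hp (by linarith)]
  have hw : 0 ≤ E1Coeff p / (1 - (p : ℝ) ^ (-2 * t - 1)) := div_nonneg hc (by linarith)
  refine ⟨by positivity, (div_le_one (by positivity)).2 ?_⟩
  nlinarith

lemma localFactor_nonneg_le_one (hp : p.Prime) (ht : -1 / 8 ≤ t) :
    0 ≤ localFactor p t ∧ localFactor p t ≤ 1 := by
  have hy1 := rpow_neg_sub_one_le_one hp.one_lt.le (t := t) (by linarith)
  have hy0 : 0 ≤ (p : ℝ) ^ (-t - 1) := by positivity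
  obtain ⟨hE0, hE1⟩ := E1R_nonneg_le_one hp ht
  unfold localFactor
  constructor <;> nlinarith

lemma abs_localFactorDeriv_le (hp : p.Prime) (ht : -1 / 8 ≤ t) :
    |localFactorDeriv p t| ≤ 4 * log p := by
  have hy1 := rpow_neg_sub_one_le_one hp.one_lt.le (t := t) (by linarith)
  have hx1 := rpow_neg_two_mul_sub_one_lt_one hp.one_lt (t := t) (by linarith)
  have hx0 : 0 < (p : ℝ) ^ (-2 * t - 1) := rpow_pos_of_pos (by exact_mod_cast hp.pos) _
  have hy0 : 0 ≤ (p : ℝ) ^ (-t - 1) := by positivity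
  have hL : 0 ≤ log p := log_nonneg (by exact_mod_cast hp.one_lt.le)
  have hc := E1Coeff_nonneg p
  have hc' := E1Coeff_le_half hp
  obtain ⟨h1, h2⟩ := E1Coeff_div_le hp ht
  unfold localFactorDeriv
  generalize (p : ℝ) ^ (-2 * t - 1) = x at *
  generalize (p : ℝ) ^ (-t - 1) = y at *
  generalize E1Coeff p = c at *
  have hB : 0 ≤ 1 + c / (1 - x) + 2 * c * x / (1 - x) ^ 2 := by
    have : 0 ≤ c / (1 - x) := div_nonneg hc (by linarith)
    positivity
  have hA : y / (1 + c) ^ 2 ≤ 1 := by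
    rw [div_le_one (by positivity)]
    nlinarith
  rw [abs_of_nonneg (by positivity), mul_div_assoc]
  calc log p * (y / (1 + c) ^ 2) * (1 + c / (1 - x) + 2 * c * x / (1 - x) ^ 2)
      ≤ log p * 1 * 4 := by gcongr; linarith
    _ = 4 * log p := by ring

end LocalFactor

lemma abs_sum_prod_erase_smul_le {ι : Type*} [DecidableEq ι] (s : Finset ι) (g g' : ι → ℝ)
    (hg : ∀ i ∈ s, |g i| ≤ 1) :
    |∑ i ∈ s, (∏ j ∈ s.erase i, g j) • g' i| ≤ ∑ i ∈ s, |g' i| := by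
  refine (abs_sum_le_sum_abs _ _).trans (sum_le_sum fun i _ => ?_)
  rw [smul_eq_mul, abs_mul, abs_prod]
  have : ∏ j ∈ s.erase i, |g j| ≤ 1 :=
    prod_le_one (fun _ _ => abs_nonneg _) fun j hj => hg j (mem_of_mem_erase hj)
  exact mul_le_of_le_one_left (abs_nonneg _) this

open ArithmeticFunction in
lemma sum_primeFactors_log_le (m : ℕ) : ∑ p ∈ m.primeFactors, Real.log p ≤ Real.log m :=
  calc ∑ p ∈ m.primeFactors, Real.log p = ∑ p ∈ m.primeFactors, Λ p :=
        sum_congr rfl fun _ hp => (vonMangoldt_apply_prime (Nat.prime_of_mem_primeFactors hp)).symm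
    _ ≤ ∑ i ∈ m.divisors, Λ i :=
        sum_le_sum_of_subset_of_nonneg
          (fun _ hp => Nat.mem_divisors.2 (Nat.mem_primeFactors.1 hp).2)
          fun _ _ _ => vonMangoldt_nonneg
    _ = Real.log m := vonMangoldt_sum

lemma prod_localFactor_nonneg_le_one (m : ℕ) {t : ℝ} (ht : -1 / 8 ≤ t) :
    0 ≤ ∏ p ∈ m.primeFactors, localFactor p t ∧ ∏ p ∈ m.primeFactors, localFactor p t ≤ 1 := by
  have h := fun p (hp : p ∈ m.primeFactors) =>
    localFactor_nonneg_le_one (Nat.prime_of_mem_primeFactors hp) ht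
  exact ⟨prod_nonneg fun p hp => (h p hp).1,
    prod_le_one (fun p hp => (h p hp).1) fun p hp => (h p hp).2⟩

lemma exists_hasDerivAt_prod_localFactor (m : ℕ) {t : ℝ} (ht : -1 / 8 ≤ t) :
    ∃ D, HasDerivAt (fun u => ∏ p ∈ m.primeFactors, localFactor p u) D t ∧
      |D| ≤ 4 * log m := by
  have hprime := fun p (hp : p ∈ m.primeFactors) => Nat.prime_of_mem_primeFactors hp
  refine ⟨_, HasDerivAt.fun_finsetProd fun p hp =>
    hasDerivAt_localFactor (hprime p hp) (by linarith), ?_⟩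
  calc _ ≤ ∑ p ∈ m.primeFactors, |localFactorDeriv p t| := by
        refine abs_sum_prod_erase_smul_le _ _ _ fun p hp => ?_
        obtain ⟨h0, h1⟩ := localFactor_nonneg_le_one (hprime p hp) ht
        rwa [abs_of_nonneg h0]
    _ ≤ ∑ p ∈ m.primeFactors, 4 * log p :=
        sum_le_sum fun p hp => abs_localFactorDeriv_le (hprime p hp) ht
    _ ≤ 4 * log m := by
        rw [← mul_sum]
        linarith [sum_primeFactors_log_le m]

noncomputable def divisorSum (d : ℕ) (t : ℝ) : ℝ :=
  ∑ f ∈ d.divisors, ∏ p ∈ (2 * f).primeFactors, localFactor p t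

lemma divisorSum_nonneg_le_card (d : ℕ) {t : ℝ} (ht : -1 / 8 ≤ t) :
    0 ≤ divisorSum d t ∧ divisorSum d t ≤ #d.divisors := by
  have h := fun f => prod_localFactor_nonneg_le_one (2 * f) ht
  refine ⟨sum_nonneg fun f _ => (h f).1, ?_⟩
  simpa [divisorSum] using sum_le_sum fun f (_ : f ∈ d.divisors) => (h f).2

lemma exists_hasDerivAt_divisorSum (d : ℕ) {t : ℝ} (ht : -1 / 8 ≤ t) :
    ∃ D, HasDerivAt (divisorSum d) D t ∧ |D| ≤ #d.divisors * (4 * log (2 * d)) := by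
  choose D hD hDle using fun f => exists_hasDerivAt_prod_localFactor (2 * f) ht
  refine ⟨∑ f ∈ d.divisors, D f, HasDerivAt.fun_sum fun f _ => hD f, ?_⟩
  calc |∑ f ∈ d.divisors, D f| ≤ ∑ f ∈ d.divisors, |D f| := abs_sum_le_sum_abs _ _
    _ ≤ ∑ _f ∈ d.divisors, 4 * log (2 * d) := sum_le_sum fun f hf => by
        have hf0 : 0 < f := Nat.pos_of_mem_divisors hf
        have hfd : (f : ℝ) ≤ d := by exact_mod_cast Nat.divisor_le hf
        refine (hDle f).trans ?_
        push_cast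
        gcongr
    _ = #d.divisors * (4 * log (2 * d)) := by rw [sum_const, nsmul_eq_mul]

noncomputable def Hterm (N d : ℕ) (s : ℝ) : ℝ :=
  if d ≠ 0 ∧ Nat.Coprime d (2 * N) then (d : ℝ) ^ (-2 - s) * divisorSum d s else 0

lemma Hfun_eq_tsum (N : ℕ) : Hfun N = fun s => ∑' d, Hterm N d s := rfl

lemma Hterm_one_zero (N : ℕ) : Hterm N 1 0 = 1 / 2 := by
  norm_num [Hterm, divisorSum, localFactor, E1R, Nat.prime_two.primeFactors, rpow_neg_one]

noncomputable def termBound (d : ℕ) : ℝ :=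
  (d : ℝ) ^ (-15 / 8 : ℝ) * #d.divisors * (1 + 5 * log (2 * d))

lemma termBound_nonneg (d : ℕ) : 0 ≤ termBound d := by
  have : 0 ≤ log (2 * d) := by exact_mod_cast log_natCast_nonneg (2 * d)
  unfold termBound
  positivity

lemma rpow_neg_two_sub_le {d : ℕ} (hd : d ≠ 0) {t : ℝ} (ht : -1 / 8 ≤ t) :
    (d : ℝ) ^ (-2 - t) ≤ (d : ℝ) ^ (-15 / 8 : ℝ) :=
  rpow_le_rpow_of_exponent_le (by exact_mod_cast Nat.one_le_iff_ne_zero.2 hd) (by linarith)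

lemma Hterm_nonneg_le (N d : ℕ) {t : ℝ} (ht : -1 / 8 ≤ t) :
    0 ≤ Hterm N d t ∧ Hterm N d t ≤ termBound d := by
  have hlog : 0 ≤ log (2 * d) := by exact_mod_cast log_natCast_nonneg (2 * d)
  unfold Hterm
  split_ifs with h
  · obtain ⟨hS0, hS⟩ := divisorSum_nonneg_le_card d ht
    refine ⟨by positivity, ?_⟩
    calc (d : ℝ) ^ (-2 - t) * divisorSum d t ≤ (d : ℝ) ^ (-15 / 8 : ℝ) * #d.divisors * 1 := by
          rw [mul_one]
          exact mul_le_mul (rpow_neg_two_sub_le h.1 ht) hS hS0 (by positivity)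
      _ ≤ termBound d := by unfold termBound; gcongr; linarith
  · exact ⟨le_rfl, termBound_nonneg d⟩

lemma exists_hasDerivAt_Hterm (N d : ℕ) {t : ℝ} (ht : -1 / 8 ≤ t) :
    ∃ D, HasDerivAt (Hterm N d) D t ∧ |D| ≤ termBound d := by
  by_cases h : d ≠ 0 ∧ Nat.Coprime d (2 * N)
  swap
  · have : Hterm N d = fun _ => 0 := funext fun _ => if_neg h
    exact ⟨0, this ▸ hasDerivAt_const t 0, by rw [abs_zero]; exact termBound_nonneg d⟩
  have hfun : Hterm N d = fun s => (d : ℝ) ^ (-2 - s) * divisorSum d s :=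
    funext fun _ => if_pos h
  have hd : (0 : ℝ) < d := by exact_mod_cast Nat.pos_of_ne_zero h.1
  obtain ⟨DS, hDS, hDSle⟩ := exists_hasDerivAt_divisorSum d ht
  obtain ⟨hS0, hS⟩ := divisorSum_nonneg_le_card d ht
  have hpow := ((hasDerivAt_id' t).const_sub (-2)).const_rpow hd
  refine ⟨_, by rw [hfun]; exact hpow.fun_mul hDS, ?_⟩
  have hlog : 0 ≤ log (2 * d) := by exact_mod_cast log_natCast_nonneg (2 * d)
  have hlogd : log d ≤ log (2 * d) := log_le_log hd (by linarith)
  have hlogd0 : 0 ≤ log d := log_natCast_nonneg d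
  have hA := rpow_neg_two_sub_le h.1 ht
  have hA0 := rpow_nonneg hd.le (-2 - t)
  calc _ ≤ |log d * -1 * (d : ℝ) ^ (-2 - t) * divisorSum d t| + |(d : ℝ) ^ (-2 - t) * DS| :=
        abs_add_le _ _
    _ = (d : ℝ) ^ (-2 - t) * (log d * divisorSum d t + |DS|) := by
        rw [abs_mul, abs_mul, abs_mul, abs_mul, abs_neg, abs_one, abs_of_nonneg hlogd0,
          abs_of_nonneg hA0, abs_of_nonneg hS0]
        ring
    _ ≤ (d : ℝ) ^ (-15 / 8 : ℝ) *
          (log (2 * d) * #d.divisors + #d.divisors * (4 * log (2 * d))) := by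
        gcongr
    _ ≤ termBound d := by
        unfold termBound
        nlinarith [rpow_nonneg hd.le (-15 / 8 : ℝ)]

lemma card_divisors_le_two_mul_sqrt (n : ℕ) : #n.divisors ≤ 2 * n.sqrt := by
  set S := n.divisors.filter (· ≤ n.sqrt)
  have hS : #S ≤ n.sqrt := by
    calc #S ≤ #(Icc 1 n.sqrt) := card_le_card fun f hf => by
          simp only [S, mem_filter] at hf
          exact mem_Icc.2 ⟨Nat.pos_of_mem_divisors hf.1, hf.2⟩
      _ = n.sqrt := by simp
  -- a divisor `f > √n` is the image of the small divisor `n / f`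
  have hsub : n.divisors ⊆ S ∪ S.image (fun f => n / f) := fun f hf => by
    by_cases hf' : f ≤ n.sqrt
    · exact mem_union_left _ (mem_filter.2 ⟨hf, hf'⟩)
    obtain ⟨hdvd, hn⟩ := Nat.mem_divisors.1 hf
    refine mem_union_right _ (mem_image.2 ⟨n / f, mem_filter.2 ⟨Nat.mem_divisors.2
      ⟨Nat.div_dvd_of_dvd hdvd, hn⟩, ?_⟩, Nat.div_div_self hdvd hn⟩)
    have hlt := Nat.lt_succ_sqrt n
    rw [← Nat.lt_succ_iff, Nat.div_lt_iff_lt_mul (Nat.pos_of_mem_divisors hf)]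
    nlinarith
  calc #n.divisors ≤ #S + #(S.image (fun f => n / f)) :=
        (card_le_card hsub).trans (card_union_le _ _)
    _ ≤ #S + #S := Nat.add_le_add_left card_image_le _
    _ ≤ 2 * n.sqrt := by omega

lemma log_two_mul_le {x : ℝ} (hx : 0 ≤ x) : log (2 * x) ≤ 8 * x ^ (1 / 4 : ℝ) := by
  have h2 : (2 : ℝ) ^ (1 / 4 : ℝ) ≤ 2 := by
    simpa using rpow_le_rpow_of_exponent_le (by norm_num : (1 : ℝ) ≤ 2)
      (by norm_num : (1 / 4 : ℝ) ≤ 1)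
  calc log (2 * x) ≤ (2 * x) ^ (1 / 4 : ℝ) / (1 / 4) :=
        log_le_rpow_div (by positivity) (by norm_num)
    _ = 4 * (2 : ℝ) ^ (1 / 4 : ℝ) * x ^ (1 / 4 : ℝ) := by
        rw [mul_rpow (by norm_num) hx]
        ring
    _ ≤ 8 * x ^ (1 / 4 : ℝ) := by nlinarith [rpow_nonneg hx (1 / 4 : ℝ)]

lemma termBound_le (d : ℕ) : termBound d ≤ 82 * (d : ℝ) ^ (-9 / 8 : ℝ) := by
  rcases Nat.eq_zero_or_pos d with rfl | hd
  · simp [termBound]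
  have hd' : (1 : ℝ) ≤ d := by exact_mod_cast hd
  have hτ : (#d.divisors : ℝ) ≤ 2 * (d : ℝ) ^ (1 / 2 : ℝ) := by
    rw [← sqrt_eq_rpow]
    calc (#d.divisors : ℝ) ≤ 2 * d.sqrt := by exact_mod_cast card_divisors_le_two_mul_sqrt d
      _ ≤ 2 * √(d : ℝ) := by gcongr; exact Real.nat_sqrt_le_real_sqrt
  have hlog : 1 + 5 * log (2 * d) ≤ 41 * (d : ℝ) ^ (1 / 4 : ℝ) := by
    have := log_two_mul_le (Nat.cast_nonneg d)
    linarith [one_le_rpow hd' (by norm_num : (0 : ℝ) ≤ 1 / 4)]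
  have hlog0 : 0 ≤ 1 + 5 * log (2 * d) := by
    have : 0 ≤ log (2 * (d : ℝ)) := log_nonneg (by linarith)
    linarith
  calc termBound d ≤ (d : ℝ) ^ (-15 / 8 : ℝ) * (2 * (d : ℝ) ^ (1 / 2 : ℝ)) *
        (41 * (d : ℝ) ^ (1 / 4 : ℝ)) := by
        unfold termBound
        gcongr
    _ = 82 * ((d : ℝ) ^ (-15 / 8 : ℝ) * (d : ℝ) ^ (1 / 2 : ℝ) * (d : ℝ) ^ (1 / 4 : ℝ)) := by ring
    _ = 82 * (d : ℝ) ^ (-9 / 8 : ℝ) := by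
        rw [← rpow_add (by positivity), ← rpow_add (by positivity)]
        norm_num

lemma summable_termBound : Summable termBound :=
  Summable.of_nonneg_of_le termBound_nonneg termBound_le
    ((summable_nat_rpow.2 (by norm_num)).mul_left 82)

theorem Hfun_bounds : ∃ K > (0:ℝ), ∀ N : ℕ, Odd N →
    1/3 ≤ Hfun N 0 ∧ Hfun N 0 ≤ K ∧ |deriv (Hfun N) 0| ≤ K := by
  have hK : 0 ≤ ∑' d, termBound d := tsum_nonneg termBound_nonneg
  refine ⟨1 + ∑' d, termBound d, by linarith, fun N _ => ?_⟩
  have h0 : (0 : ℝ) ∈ Set.Ioi (-1 / 8) := by norm_num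
  have hvalue := fun d => Hterm_nonneg_le N d (t := 0) (by norm_num)
  have hvalue' : ∀ d, ‖Hterm N d 0‖ ≤ termBound d := fun d => by
    rw [Real.norm_of_nonneg (hvalue d).1]
    exact (hvalue d).2
  have hslope : ∀ d, ∀ t ∈ Set.Ioi (-1 / 8 : ℝ),
      HasDerivAt (Hterm N d) (deriv (Hterm N d) t) t ∧ ‖deriv (Hterm N d) t‖ ≤ termBound d :=
    fun d t ht => by
      obtain ⟨D, hD, hDle⟩ := exists_hasDerivAt_Hterm N d ht.le
      exact ⟨hD.differentiableAt.hasDerivAt, by rwa [hD.deriv]⟩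
  have hsum : Summable (Hterm N · 0) := summable_termBound.of_norm_bounded hvalue'
  have hH : HasDerivAt (Hfun N) (∑' d, deriv (Hterm N d) 0) 0 := by
    rw [Hfun_eq_tsum]
    exact hasDerivAt_tsum_of_isPreconnected summable_termBound isOpen_Ioi isPreconnected_Ioi
      (fun d t ht => (hslope d t ht).1) (fun d t ht => (hslope d t ht).2) h0 hsum h0
  have hH0 := tsum_of_norm_bounded summable_termBound.hasSum hvalue'
  have hH' := tsum_of_norm_bounded summable_termBound.hasSum fun d => (hslope d 0 h0).2
  rw [Real.norm_eq_abs] at hH0 hH'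
  rw [hH.deriv, Hfun_eq_tsum]
  refine ⟨?_, by linarith [le_abs_self (∑' d, Hterm N d 0)], by linarith⟩
  calc (1 / 3 : ℝ) ≤ Hterm N 1 0 := by rw [Hterm_one_zero]; norm_num
    _ ≤ ∑' d, Hterm N d 0 := hsum.le_tsum 1 fun d _ => (hvalue d).1
end

section
/- Suppose that for each squarefree odd $m \leq P$ and squarefree odd $n \leq Q$ one has complex numbers satisfying the large sieve inequality $\sum^*_{m \leq P}\left|\sum^*_{n \leq Q} a_n \left(\frac{n}{m}\right)\right|^2 \ll_\varepsilon (PQ)^\varepsilon (P + Q) \sum^*_{n\leq Q}|a_n|^2$ (Heath-Brown's quadratic large sieve). Then for any sequences $(a_m), (b_n)$ of complex numbers with $|a_m| \leq m^{-1/2+\varepsilon}$ and $|b_n| \leq n^{-1/2+\varepsilon}$, and writing $n = n_0 n_1^2$ with $n_0$ squarefree, one has $\left|\sum_{m \leq P,\, m \text{ odd}}\sum_{n \leq Q,\, n \text{ odd}} a_m b_n \left(\frac{n_0}{m}\right)\right| \ll_\varepsilon (PQ)^\varepsilon (P + Q)^{1/2 + \varepsilon}$, uniformly in $P, Q > 0$.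 -/
open scoped Classical in
/-- The set of odd squarefree integers in `[1, P]`. -/
noncomputable def oddSqfree (P : ℕ) : Finset ℕ :=
  (Finset.Icc 1 P).filter (fun m => m % 2 = 1 ∧ Squarefree m)

/-- The squarefree kernel `n₀` in the decomposition `n = n₀ n₁²`. -/
def sqfKernel (n : ℕ) : ℕ := ∏ p ∈ n.primeFactors, p ^ (n.factorization p % 2)

/-!
Write `m = m₀ m₁²` and `n = n₀ n₁²` with `m₀, n₀` squarefree. For fixed `m₁, n₁` the symbol
`(n₀ / m₀ m₁²)` factors as `(n₀ / m₀) (n₀ / m₁²)`, so the block of the sum with these square parts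
is a bilinear form in the squarefree parts, and Cauchy–Schwarz plus the large sieve bound it by
`(PQ)^{3ε/2} (P + Q)^{1/2} (m₁ n₁)^{-1-ε}` once the coefficient bounds `|a_m| ≤ m^{-1/2+ε}` are
summed. The weights `(m₁ n₁)^{-1-ε}` are summable, and `(PQ)^{ε/2} ≤ (P + Q)^ε` finishes.
-/

open Finset

theorem factorization_sqfKernel (n : ℕ) :
    (sqfKernel n).factorization = n.factorization.mapRange (· % 2) (Nat.zero_mod 2) := by
  have h : sqfKernel n = (n.factorization.mapRange (· % 2) (Nat.zero_mod 2)).prod (· ^ ·) := by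
    rw [Finsupp.prod_mapRange_index (fun _ => pow_zero _)]
    rfl
  rw [h, Nat.prod_pow_factorization_eq_self fun p hp =>
    Nat.prime_of_mem_primeFactors (Finsupp.support_mapRange hp)]

theorem sqfKernel_mul_sq {m₀ m₁ : ℕ} (h₀ : Squarefree m₀) (h₁ : m₁ ≠ 0) :
    sqfKernel (m₀ * m₁ ^ 2) = m₀ := by
  have hpos : sqfKernel (m₀ * m₁ ^ 2) ≠ 0 :=
    prod_ne_zero_iff.2 fun p hp => pow_ne_zero _ (Nat.prime_of_mem_primeFactors hp).ne_zero
  refine Nat.eq_of_factorization_eq hpos h₀.ne_zero fun p => ?_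
  have hp := h₀.natFactorization_le_one p
  rw [factorization_sqfKernel, Finsupp.mapRange_apply,
    Nat.factorization_mul h₀.ne_zero (pow_ne_zero 2 h₁), Nat.factorization_pow]
  simp only [Finsupp.add_apply, Finsupp.smul_apply, smul_eq_mul]
  omega

theorem sum_odd_eq_sum_sq_mul_oddSqfree {M : Type*} [AddCommMonoid M] (P : ℕ) (f : ℕ → M) :
    ∑ m ∈ (Icc 1 P).filter (fun m => m % 2 = 1), f m =
      ∑ m₁ ∈ (Icc 1 P).filter (fun m => m % 2 = 1),
        ∑ m₀ ∈ oddSqfree (P / m₁ ^ 2), f (m₀ * m₁ ^ 2) := by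
  rw [sum_sigma']
  refine (sum_bij (fun x _ => x.2 * x.1 ^ 2) ?_ ?_ ?_ fun _ _ => rfl).symm
  · rintro ⟨m₁, m₀⟩ hx
    simp only [mem_sigma, mem_filter, mem_Icc, oddSqfree, ← Nat.odd_iff] at hx ⊢
    obtain ⟨⟨⟨h₁, -⟩, hodd₁⟩, ⟨h₀, hle⟩, hodd₀, -⟩ := hx
    exact ⟨⟨Nat.mul_pos h₀ (pow_pos h₁ 2), (Nat.le_div_iff_mul_le (pow_pos h₁ 2)).1 hle⟩,
      hodd₀.mul (hodd₁.pow)⟩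
  · rintro ⟨m₁, m₀⟩ hx ⟨k₁, k₀⟩ hy h
    simp only [mem_sigma, mem_filter, mem_Icc, oddSqfree] at hx hy h
    have h₀ : m₀ = k₀ := by
      rw [← sqfKernel_mul_sq hx.2.2.2 (m₁ := m₁) (by omega), h,
        sqfKernel_mul_sq hy.2.2.2 (by omega)]
    subst h₀
    have h₁ : m₁ = k₁ :=
      Nat.pow_left_injective two_ne_zero (Nat.eq_of_mul_eq_mul_left (by omega) h)
    rw [h₁]
  · intro m hm
    simp only [mem_filter, mem_Icc, ← Nat.odd_iff] at hm
    obtain ⟨⟨hpos, hP⟩, hodd⟩ := hm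
    obtain ⟨m₀, m₁, h₀, h₁, rfl, hsq⟩ := Nat.sq_mul_squarefree_of_pos hpos
    refine ⟨⟨m₁, m₀⟩, ?_, mul_comm _ _⟩
    simp only [mem_sigma, mem_filter, mem_Icc, oddSqfree, ← Nat.odd_iff]
    have hm₁ : m₁ ∣ m₁ ^ 2 * m₀ := Dvd.dvd.mul_right (dvd_pow_self _ two_ne_zero) _
    refine ⟨⟨⟨h₁, (Nat.le_of_dvd hpos hm₁).trans hP⟩, hodd.of_dvd_nat hm₁⟩,
      ⟨h₀, (Nat.le_div_iff_mul_le (pow_pos h₁ 2)).2 (by linarith)⟩,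
      hodd.of_dvd_nat (Dvd.intro_left _ rfl), hsq⟩

theorem sum_odd_odd_eq_sum_sum_sq_mul_oddSqfree {M : Type*} [AddCommMonoid M] (P Q : ℕ)
    (F : ℕ → ℕ → M) :
    ∑ m ∈ (Icc 1 P).filter (fun m => m % 2 = 1), ∑ n ∈ (Icc 1 Q).filter (fun n => n % 2 = 1),
        F m n =
      ∑ m₁ ∈ (Icc 1 P).filter (fun m => m % 2 = 1), ∑ n₁ ∈ (Icc 1 Q).filter (fun n => n % 2 = 1),
        ∑ m₀ ∈ oddSqfree (P / m₁ ^ 2), ∑ n₀ ∈ oddSqfree (Q / n₁ ^ 2),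
          F (m₀ * m₁ ^ 2) (n₀ * n₁ ^ 2) := by
  rw [sum_odd_eq_sum_sq_mul_oddSqfree P]
  refine sum_congr rfl fun m₁ _ => ?_
  exact (sum_congr rfl fun m₀ _ => sum_odd_eq_sum_sq_mul_oddSqfree Q _).trans sum_comm

theorem sum_Icc_rpow_le_one_add_integral {r : ℝ} (hr : r ≤ 0) {N : ℕ} (hN : 1 ≤ N) :
    ∑ k ∈ Icc 1 N, (k : ℝ) ^ r ≤ 1 + ∫ x in (1 : ℝ)..N, x ^ r := by
  have hanti : AntitoneOn (fun x : ℝ => x ^ r) (Set.Icc (1 : ℕ) N) := fun x hx y _ hxy =>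
    Real.rpow_le_rpow_of_nonpos (lt_of_lt_of_le (by norm_num) hx.1) hxy hr
  have := hanti.sum_le_integral_Ico hN
  rw [← Ico_add_one_right_eq_Icc, sum_eq_sum_Ico_succ_bot (by omega), Nat.cast_one, Real.one_rpow,
    ← sum_Ico_add' (c := 1)]
  simpa using this

theorem sum_Icc_rpow_neg_one_sub_le {ε : ℝ} (hε : 0 < ε) (N : ℕ) :
    ∑ k ∈ Icc 1 N, (k : ℝ) ^ (-1 - ε) ≤ 1 + 1 / ε := by
  rcases Nat.eq_zero_or_pos N with rfl | hN
  · rw [Icc_eq_empty (by norm_num), sum_empty]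
    positivity
  refine (sum_Icc_rpow_le_one_add_integral (by linarith) hN).trans ?_
  rw [integral_rpow (Or.inr ⟨by linarith, by simp [Set.uIcc_of_le (Nat.one_le_cast.2 hN)]⟩),
    show -1 - ε + 1 = -ε by ring, Real.one_rpow, div_neg, ← neg_div, neg_sub]
  have : 0 ≤ (N : ℝ) ^ (-ε) := by positivity
  gcongr
  linarith

theorem sum_Icc_rpow_sub_one_le {δ : ℝ} (hδ : 0 < δ) (N : ℕ) :
    ∑ k ∈ Icc 1 N, (k : ℝ) ^ (δ - 1) ≤ (1 + 1 / δ) * (N : ℝ) ^ δ := by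
  rcases Nat.eq_zero_or_pos N with rfl | hN
  · simp [Real.zero_rpow hδ.ne']
  have hN1 : (1 : ℝ) ≤ N := Nat.one_le_cast.2 hN
  have h1 : 1 ≤ (N : ℝ) ^ δ := Real.one_le_rpow hN1 hδ.le
  rcases le_total δ 1 with hδ1 | hδ1
  · refine (sum_Icc_rpow_le_one_add_integral (by linarith) hN).trans ?_
    rw [integral_rpow (Or.inl (by linarith)), sub_add_cancel, Real.one_rpow, add_mul, one_mul,
      one_div_mul_eq_div]
    gcongr
    linarith
  · calc ∑ k ∈ Icc 1 N, (k : ℝ) ^ (δ - 1) ≤ ∑ _k ∈ Icc 1 N, (N : ℝ) ^ (δ - 1) :=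
          sum_le_sum fun k hk => by
            simp only [mem_Icc] at hk
            exact Real.rpow_le_rpow (by positivity) (by exact_mod_cast hk.2) (by linarith)
      _ = (N : ℝ) ^ δ := by
          rw [sum_const, Nat.card_Icc, add_tsub_cancel_right, nsmul_eq_mul,
            Real.rpow_sub_one (by positivity)]
          field_simp
      _ ≤ (1 + 1 / δ) * (N : ℝ) ^ δ :=
          le_mul_of_one_le_left (by positivity) (le_add_of_nonneg_right (by positivity))

def QuadraticLargeSieve (C₀ ε : ℝ) : Prop :=
  ∀ P Q : ℕ, ∀ a : ℕ → ℂ,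
    ∑ m ∈ oddSqfree P, ‖∑ n ∈ oddSqfree Q, a n * (jacobiSym (n : ℤ) m : ℂ)‖ ^ 2 ≤
      C₀ * ((P : ℝ) * Q) ^ ε * ((P : ℝ) + Q) * ∑ n ∈ oddSqfree Q, ‖a n‖ ^ 2

theorem QuadraticLargeSieve.norm_bilinear_sq_le {C₀ ε : ℝ} (hls : QuadraticLargeSieve C₀ ε)
    (P Q : ℕ) (α β : ℕ → ℂ) :
    ‖∑ m ∈ oddSqfree P, ∑ n ∈ oddSqfree Q, α m * β n * (jacobiSym (n : ℤ) m : ℂ)‖ ^ 2 ≤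
      C₀ * ((P : ℝ) * Q) ^ ε * ((P : ℝ) + Q) *
        (∑ m ∈ oddSqfree P, ‖α m‖ ^ 2) * ∑ n ∈ oddSqfree Q, ‖β n‖ ^ 2 := by
  set L := fun m : ℕ => ‖∑ n ∈ oddSqfree Q, β n * (jacobiSym (n : ℤ) m : ℂ)‖
  have htri : ‖∑ m ∈ oddSqfree P, ∑ n ∈ oddSqfree Q, α m * β n * (jacobiSym (n : ℤ) m : ℂ)‖ ≤
      ∑ m ∈ oddSqfree P, ‖α m‖ * L m := by
    refine (norm_sum_le _ _).trans_eq (sum_congr rfl fun m _ => ?_)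
    simp only [L, mul_assoc, ← mul_sum, norm_mul]
  calc _ ≤ (∑ m ∈ oddSqfree P, ‖α m‖ * L m) ^ 2 := by gcongr
    _ ≤ (∑ m ∈ oddSqfree P, ‖α m‖ ^ 2) * ∑ m ∈ oddSqfree P, L m ^ 2 :=
      sum_mul_sq_le_sq_mul_sq _ _ _
    _ ≤ (∑ m ∈ oddSqfree P, ‖α m‖ ^ 2) *
        (C₀ * ((P : ℝ) * Q) ^ ε * ((P : ℝ) + Q) * ∑ n ∈ oddSqfree Q, ‖β n‖ ^ 2) := by
      gcongr
      exact hls P Q β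
    _ = _ := by ring

theorem sum_oddSqfree_norm_sq_le {ε : ℝ} (hε : 0 < ε) (P : ℕ) {d : ℕ} (hd : d ≠ 0)
    (c : ℕ → ℂ) (hc : ∀ k, 1 ≤ k → ‖c k‖ ≤ ((k * d : ℕ) : ℝ) ^ (-(1 : ℝ) / 2 + ε)) :
    ∑ k ∈ oddSqfree (P / d), ‖c k‖ ^ 2 ≤ (1 + 1 / (2 * ε)) * (P : ℝ) ^ (2 * ε) / d := by
  have hd0 : (0 : ℝ) < d := by positivity
  have hsq : ∀ k, 1 ≤ k → ‖c k‖ ^ 2 ≤ (k : ℝ) ^ (2 * ε - 1) * (d : ℝ) ^ (2 * ε - 1) := by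
    intro k hk
    calc ‖c k‖ ^ 2 ≤ (((k * d : ℕ) : ℝ) ^ (-(1 : ℝ) / 2 + ε)) ^ 2 := by gcongr; exact hc k hk
      _ = (k : ℝ) ^ (2 * ε - 1) * (d : ℝ) ^ (2 * ε - 1) := by
        rw [← Real.rpow_mul_natCast (by positivity), Nat.cast_mul,
          Real.mul_rpow (by positivity) (by positivity)]
        ring_nf
  have hNd : ((P / d : ℕ) : ℝ) * d ≤ P := by exact_mod_cast Nat.div_mul_le_self P d
  calc ∑ k ∈ oddSqfree (P / d), ‖c k‖ ^ 2
      ≤ ∑ k ∈ Icc 1 (P / d), (k : ℝ) ^ (2 * ε - 1) * (d : ℝ) ^ (2 * ε - 1) := by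
        refine sum_le_sum_of_subset_of_nonneg (filter_subset _ _) (fun _ _ _ => by positivity)
          |>.trans' (sum_le_sum fun k hk => hsq k ?_)
        simp only [oddSqfree, mem_filter, mem_Icc] at hk
        exact hk.1.1
    _ ≤ (1 + 1 / (2 * ε)) * ((P / d : ℕ) : ℝ) ^ (2 * ε) * (d : ℝ) ^ (2 * ε - 1) := by
        rw [← sum_mul]
        gcongr
        exact sum_Icc_rpow_sub_one_le (by positivity) _
    _ = (1 + 1 / (2 * ε)) * (((P / d : ℕ) : ℝ) * d) ^ (2 * ε) / d := by
        rw [Real.mul_rpow (by positivity) hd0.le, Real.rpow_sub_one hd0.ne']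
        ring
    _ ≤ (1 + 1 / (2 * ε)) * (P : ℝ) ^ (2 * ε) / d := by gcongr

theorem rpow_half_sq {x : ℝ} (hx : 0 ≤ x) (t : ℝ) : (x ^ (t / 2)) ^ 2 = x ^ t := by
  rw [← Real.rpow_mul_natCast hx]
  ring_nf

theorem QuadraticLargeSieve.norm_bilinear_le_of_decay {C₀ ε : ℝ} (hls : QuadraticLargeSieve C₀ ε)
    (hC₀ : 0 ≤ C₀) (hε : 0 < ε) (P Q : ℕ) {d e : ℕ} (hd : d ≠ 0) (he : e ≠ 0) (α β : ℕ → ℂ)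
    (hα : ∀ k, 1 ≤ k → ‖α k‖ ≤ ((k * d : ℕ) : ℝ) ^ (-(1 : ℝ) / 2 + ε))
    (hβ : ∀ k, 1 ≤ k → ‖β k‖ ≤ ((k * e : ℕ) : ℝ) ^ (-(1 : ℝ) / 2 + ε)) :
    ‖∑ m ∈ oddSqfree (P / d), ∑ n ∈ oddSqfree (Q / e), α m * β n * (jacobiSym (n : ℤ) m : ℂ)‖ ≤
      √C₀ * (1 + 1 / (2 * ε)) * (((P : ℝ) * Q) ^ (3 * ε / 2) * ((P : ℝ) + Q) ^ ((1 : ℝ) / 2)) /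
        ((d : ℝ) * e) ^ ((1 + ε) / 2) := by
  have hd0 : (0 : ℝ) < d := by positivity
  have he0 : (0 : ℝ) < e := by positivity
  have hN : ((P / d : ℕ) : ℝ) ≤ P / d := Nat.cast_div_le
  have hM : ((Q / e : ℕ) : ℝ) ≤ Q / e := Nat.cast_div_le
  rw [← pow_le_pow_iff_left₀ (norm_nonneg _) (by positivity) two_ne_zero]
  refine (hls.norm_bilinear_sq_le _ _ α β).trans ?_
  calc
    _ ≤ C₀ * ((P / d : ℝ) * (Q / e)) ^ ε * ((P : ℝ) + Q) *
        ((1 + 1 / (2 * ε)) * (P : ℝ) ^ (2 * ε) / d) *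
        ((1 + 1 / (2 * ε)) * (Q : ℝ) ^ (2 * ε) / e) := by
      gcongr
      · exact Nat.div_le_self P d
      · exact Nat.div_le_self Q e
      · exact sum_oddSqfree_norm_sq_le hε P hd α hα
      · exact sum_oddSqfree_norm_sq_le hε Q he β hβ
    _ = _ := by
      rw [div_pow, mul_pow, mul_pow, mul_pow, Real.sq_sqrt hC₀, rpow_half_sq (by positivity),
        rpow_half_sq (by positivity), rpow_half_sq (by positivity), div_mul_div_comm,
        Real.div_rpow (by positivity) (by positivity), Real.rpow_add (mul_pos hd0 he0),
        Real.rpow_one, Real.rpow_one,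
        show 3 * ε = ε + 2 * ε by ring, Real.rpow_add' (by positivity) (by positivity),
        Real.mul_rpow (x := (P : ℝ)) (z := 2 * ε) (by positivity) (by positivity)]
      field_simp

theorem norm_jacobiSym_le_one (a : ℤ) (b : ℕ) : ‖(jacobiSym a b : ℂ)‖ ≤ 1 := by
  rcases jacobiSym.trichotomy a b with h | h | h <;> simp [h]

theorem QuadraticLargeSieve.norm_sum_fixed_square_parts_le {C₀ ε : ℝ}
    (hls : QuadraticLargeSieve C₀ ε) (hC₀ : 0 ≤ C₀) (hε : 0 < ε) (P Q : ℕ) (a b : ℕ → ℂ)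
    (ha : ∀ m, 1 ≤ m → ‖a m‖ ≤ (m : ℝ) ^ (-(1 : ℝ) / 2 + ε))
    (hb : ∀ n, 1 ≤ n → ‖b n‖ ≤ (n : ℝ) ^ (-(1 : ℝ) / 2 + ε)) {r s : ℕ} (hr : r ≠ 0) (hs : s ≠ 0) :
    ‖∑ m₀ ∈ oddSqfree (P / r ^ 2), ∑ n₀ ∈ oddSqfree (Q / s ^ 2),
        a (m₀ * r ^ 2) * b (n₀ * s ^ 2) *
          (jacobiSym (sqfKernel (n₀ * s ^ 2) : ℤ) (m₀ * r ^ 2) : ℂ)‖ ≤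
      √C₀ * (1 + 1 / (2 * ε)) * (((P : ℝ) * Q) ^ (3 * ε / 2) * ((P : ℝ) + Q) ^ ((1 : ℝ) / 2)) *
        ((r : ℝ) ^ (-1 - ε) * (s : ℝ) ^ (-1 - ε)) := by
  have hsplit : ∀ m₀ ∈ oddSqfree (P / r ^ 2), ∀ n₀ ∈ oddSqfree (Q / s ^ 2),
      a (m₀ * r ^ 2) * b (n₀ * s ^ 2) *
          (jacobiSym (sqfKernel (n₀ * s ^ 2) : ℤ) (m₀ * r ^ 2) : ℂ) =
        a (m₀ * r ^ 2) * (b (n₀ * s ^ 2) * (jacobiSym (n₀ : ℤ) (r ^ 2) : ℂ)) *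
          (jacobiSym (n₀ : ℤ) m₀ : ℂ) := by
    intro m₀ hm₀ n₀ hn₀
    simp only [oddSqfree, mem_filter, mem_Icc] at hm₀ hn₀
    rw [sqfKernel_mul_sq hn₀.2.2 hs, jacobiSym.mul_right' _ (by omega) (pow_ne_zero 2 hr)]
    push_cast
    ring
  have hweight : ∀ {k : ℕ}, k ≠ 0 →
      ((k ^ 2 : ℕ) : ℝ) ^ ((1 + ε) / 2) = ((k : ℝ) ^ (-1 - ε))⁻¹ := by
    intro k hk
    rw [Nat.cast_pow, ← Real.rpow_natCast_mul (by positivity), show -1 - ε = -(1 + ε) by ring,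
      Real.rpow_neg (by positivity), inv_inv]
    ring_nf
  rw [sum_congr rfl fun m₀ hm₀ => sum_congr rfl (hsplit m₀ hm₀)]
  refine (hls.norm_bilinear_le_of_decay hC₀ hε P Q (pow_ne_zero 2 hr) (pow_ne_zero 2 hs) _ _
    (fun k hk => ha _ (Nat.one_le_iff_ne_zero.2 (by positivity)))
    (fun k hk => ?_)).trans_eq ?_
  · rw [norm_mul]
    exact (mul_le_of_le_one_right (norm_nonneg _) (norm_jacobiSym_le_one _ _)).trans
      (hb _ (Nat.one_le_iff_ne_zero.2 (by positivity)))
  · rw [Real.mul_rpow (x := ((r ^ 2 : ℕ) : ℝ)) (by positivity) (by positivity), hweight hr,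
      hweight hs]
    field_simp

theorem mul_rpow_mul_add_rpow_le {x y ε : ℝ} (hx : 0 ≤ x) (hy : 0 ≤ y) (hε : 0 < ε) :
    (x * y) ^ (3 * ε / 2) * (x + y) ^ ((1 : ℝ) / 2) ≤
      (x * y) ^ ε * (x + y) ^ ((1 : ℝ) / 2 + ε) := by
  have hgm : (x * y) ^ ((1 : ℝ) / 2) ≤ x + y := by
    rw [← Real.sqrt_eq_rpow, Real.sqrt_le_left (by positivity)]
    nlinarith
  calc (x * y) ^ (3 * ε / 2) * (x + y) ^ ((1 : ℝ) / 2)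
      = (x * y) ^ ε * (((x * y) ^ ((1 : ℝ) / 2)) ^ ε * (x + y) ^ ((1 : ℝ) / 2)) := by
        rw [← Real.rpow_mul (by positivity), ← mul_assoc, ← Real.rpow_add' (by positivity)
          (by positivity)]
        ring_nf
    _ ≤ (x * y) ^ ε * ((x + y) ^ ε * (x + y) ^ ((1 : ℝ) / 2)) := by gcongr
    _ = (x * y) ^ ε * (x + y) ^ ((1 : ℝ) / 2 + ε) := by
        rw [← Real.rpow_add' (by positivity) (by positivity), add_comm ε]

theorem large_sieve_corollary (ε : ℝ) (hε : 0 < ε) (C₀ : ℝ) (hC₀ : 0 < C₀)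
    (hls : ∀ P Q : ℕ, ∀ a : ℕ → ℂ,
      ∑ m ∈ oddSqfree P, ‖∑ n ∈ oddSqfree Q, a n * (jacobiSym (n:ℤ) m : ℂ)‖ ^ 2 ≤
        C₀ * ((P:ℝ) * Q) ^ ε * ((P:ℝ) + Q) * ∑ n ∈ oddSqfree Q, ‖a n‖ ^ 2) :
    ∃ C > (0:ℝ), ∀ P Q : ℕ, 1 ≤ P → 1 ≤ Q → ∀ a b : ℕ → ℂ,
      (∀ m, 1 ≤ m → ‖a m‖ ≤ (m:ℝ) ^ (-(1:ℝ)/2 + ε)) →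
      (∀ n, 1 ≤ n → ‖b n‖ ≤ (n:ℝ) ^ (-(1:ℝ)/2 + ε)) →
      ‖∑ m ∈ (Finset.Icc 1 P).filter (fun m => m % 2 = 1),
          ∑ n ∈ (Finset.Icc 1 Q).filter (fun n => n % 2 = 1),
            a m * b n * (jacobiSym (sqfKernel n : ℤ) m : ℂ)‖ ≤
        C * ((P:ℝ) * Q) ^ ε * ((P:ℝ) + Q) ^ ((1:ℝ)/2 + ε) := by
  replace hls : QuadraticLargeSieve C₀ ε := hls
  set K := √C₀ * (1 + 1 / (2 * ε))
  refine ⟨K * (1 + 1 / ε) ^ 2, by positivity, fun P Q _ _ a b ha hb => ?_⟩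
  have hweights : ∀ N : ℕ,
      ∑ k ∈ (Icc 1 N).filter (fun k => k % 2 = 1), (k : ℝ) ^ (-1 - ε) ≤ 1 + 1 / ε :=
    fun N => (sum_le_sum_of_subset_of_nonneg (filter_subset _ _) fun _ _ _ => by positivity).trans
      (sum_Icc_rpow_neg_one_sub_le hε N)
  rw [sum_odd_odd_eq_sum_sum_sq_mul_oddSqfree]
  set A := ((P : ℝ) * Q) ^ (3 * ε / 2) * ((P : ℝ) + Q) ^ ((1 : ℝ) / 2)
  calc _ ≤ ∑ m₁ ∈ (Icc 1 P).filter (fun m => m % 2 = 1),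
        ∑ n₁ ∈ (Icc 1 Q).filter (fun n => n % 2 = 1),
          K * A * ((m₁ : ℝ) ^ (-1 - ε) * (n₁ : ℝ) ^ (-1 - ε)) := by
        refine (norm_sum_le _ _).trans (sum_le_sum fun m₁ hm₁ => (norm_sum_le _ _).trans
          (sum_le_sum fun n₁ hn₁ => ?_))
        simp only [mem_filter, mem_Icc] at hm₁ hn₁
        exact hls.norm_sum_fixed_square_parts_le hC₀.le hε P Q a b ha hb (by omega) (by omega)
    _ = K * A * ((∑ m₁ ∈ (Icc 1 P).filter (fun m => m % 2 = 1), (m₁ : ℝ) ^ (-1 - ε)) *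
        ∑ n₁ ∈ (Icc 1 Q).filter (fun n => n % 2 = 1), (n₁ : ℝ) ^ (-1 - ε)) := by
        rw [sum_mul_sum, mul_sum]
        simp_rw [mul_sum]
    _ ≤ K * (1 + 1 / ε) ^ 2 * (((P : ℝ) * Q) ^ ε * ((P : ℝ) + Q) ^ ((1 : ℝ) / 2 + ε)) := by
        rw [mul_right_comm, sq]
        gcongr
        · exact hweights P
        · exact hweights Q
        · exact mul_rpow_mul_add_rpow_le (by positivity) (by positivity) hε
    _ = _ := by ring
end
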